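/- Let G be a quasi 3-regular, 3-edge-connected multigraph, let (v, w) be an edge of G with v or w equal to the high-degree vertex, and let u be a vertex distinct from v and w. Suppose G has at most one double edge and, if it has one, u is an endpoint of that double edge. Then G contains a chordless cycle that contains the edge (v, w) and does not contain the vertex u. -/

import Mathlib

/-! Basic theory of loopless undirected multigraphs. -/

/-- A loopless undirected multigraph on the vertex type `V`: a type of edges
together with a map assigning to each edge its unordered pair of (distinct)
endpoints.  All multigraphs are assumed to have finitely many edges. -/
structure Multigraph (V : Type) where
  Edge : Type
  ends : Edge → Sym2 V
  loopless : ∀ e, ¬ (ends e).IsDiag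
  edge_finite : Finite Edge

namespace Multigraph

open scoped Classical

variable {V : Type}

instance (G : Multigraph V) : Finite G.Edge := G.edge_finite

lemma exists_pair_eq {α : Type} (z : Sym2 α) : ∃ x y, z = s(x, y) := by
  induction z using Sym2.ind with
  | _ x y => exact ⟨x, y, rfl⟩

lemma map_not_isDiag {α β : Type} (f : α → β) (z : Sym2 α)
    (hf : ∀ x ∈ z, ∀ y ∈ z, f x = f y → x = y) (hz : ¬ z.IsDiag) :
    ¬ (z.map f).IsDiag := by
  obtain ⟨x, y, rfl⟩ := exists_pair_eq z
  rw [Sym2.map_pair_eq, Sym2.mk_isDiag_iff]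
  rw [Sym2.mk_isDiag_iff] at hz
  exact fun h => hz (hf x (by simp) y (by simp) h)

/-- Restrict an unordered pair, all of whose members satisfy `P`, to an
unordered pair of elements of the subtype `{x // P x}`. -/
noncomputable def sym2RestrictP {α : Type} (P : α → Prop) (z : Sym2 α) (h : ∀ x ∈ z, P x) :
    Sym2 {x : α // P x} :=
  z.map fun x =>
    if hx : P x then ⟨x, hx⟩
    else Classical.choice (by
      obtain ⟨a, b, rfl⟩ := exists_pair_eq z
      exact ⟨⟨a, h a (by simp)⟩⟩)

lemma sym2RestrictP_not_isDiag {α : Type} (P : α → Prop) (z : Sym2 α) (h : ∀ x ∈ z, P x)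
    (hz : ¬ z.IsDiag) : ¬ (sym2RestrictP P z h).IsDiag := by
  apply map_not_isDiag
  · intro a ha b hb hab
    rw [dif_pos (h a ha), dif_pos (h b hb)] at hab
    exact congrArg Subtype.val hab
  · exact hz

/-- Walks in a multigraph, recorded as alternating sequences of vertices and edges. -/
inductive Walk (G : Multigraph V) : V → V → Type
  | nil (v : V) : Walk G v v
  | cons {u v w : V} (e : G.Edge) (he : G.ends e = s(u, v)) (p : Walk G v w) : Walk G u w

namespace Walk

variable {G : Multigraph V}

/-- The list of edges used by a walk. -/
def edges : ∀ {u v : V}, G.Walk u v → List G.Edge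
  | _, _, nil _ => []
  | _, _, cons e _ p => e :: p.edges

/-- The list of vertices visited by a walk, in order. -/
def support : ∀ {u v : V}, G.Walk u v → List V
  | u, _, nil _ => [u]
  | u, _, cons _ _ p => u :: p.support

end Walk

/-- `G.HasEDP u v k` : there are (at least) `k` pairwise edge-disjoint paths
between `u` and `v` in `G` (formalized as `k` pairwise edge-disjoint trails,
which is equivalent). -/
def HasEDP (G : Multigraph V) (u v : V) (k : ℕ) : Prop :=
  ∃ P : Fin k → G.Walk u v,
    (∀ i, (P i).edges.Nodup) ∧
    ∀ i j, i ≠ j → ∀ e, e ∈ (P i).edges → e ∉ (P j).edges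

/-- `G` is `k`-edge-connected: between any two distinct vertices there are at
least `k` pairwise edge-disjoint paths. -/
def EdgeConnected (G : Multigraph V) (k : ℕ) : Prop :=
  Nontrivial V ∧ ∀ u v : V, u ≠ v → G.HasEDP u v k

/-- `G` is exactly `k`-edge-connected: between any two distinct vertices there
are exactly `k` pairwise edge-disjoint paths (at least `k`, and not `k + 1`). -/
def ExactlyEdgeConnected (G : Multigraph V) (k : ℕ) : Prop :=
  Nontrivial V ∧ ∀ u v : V, u ≠ v → G.HasEDP u v k ∧ ¬ G.HasEDP u v (k + 1)

/-- The degree of a vertex: the number of edges incident to it. -/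
noncomputable def degree (G : Multigraph V) (v : V) : ℕ :=
  {e : G.Edge | v ∈ G.ends e}.ncard

/-- Two vertices are adjacent if some edge joins them. -/
def Adj (G : Multigraph V) (u v : V) : Prop := ∃ e : G.Edge, G.ends e = s(u, v)

/-- `G` restricted to `S` is connected (witnessed by walks staying inside `S`). -/
def ConnectedOn (G : Multigraph V) (S : Set V) : Prop :=
  ∀ u ∈ S, ∀ v ∈ S, ∃ p : G.Walk u v, ∀ x ∈ p.support, x ∈ S

/-- A multigraph is connected if it is nonempty and any two vertices are
joined by a walk. -/
def Connected (G : Multigraph V) : Prop :=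
  Nonempty V ∧ ∀ u v : V, Nonempty (G.Walk u v)

/-- A multigraph is 2-vertex-connected (biconnected) if it is connected and
removing any single vertex leaves it connected. -/
def Biconnected (G : Multigraph V) : Prop :=
  G.Connected ∧ ∀ x : V, G.ConnectedOn {x}ᶜ

/-- A closed walk is a cycle if it repeats no edge, repeats no vertex except
the base point, and has length at least 2 (a double edge is a cycle of
length 2; loops are excluded since multigraphs are loopless). -/
def IsCycle {G : Multigraph V} {v : V} (p : G.Walk v v) : Prop :=
  p.edges.Nodup ∧ p.support.tail.Nodup ∧ 2 ≤ p.edges.length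

/-- A closed walk is chordless if no edge outside of it joins two of its
vertices (a parallel copy of one of its edges counts as a chord). -/
def IsChordless {G : Multigraph V} {v : V} (p : G.Walk v v) : Prop :=
  ∀ e : G.Edge, e ∉ p.edges → ∀ x y : V, G.ends e = s(x, y) →
    x ∈ p.support → y ∈ p.support → False

/-- `G.ReachAvoid S x y`: there is a walk from `x` to `y` avoiding the set `S`. -/
def ReachAvoid (G : Multigraph V) (S : Set V) (x y : V) : Prop :=
  ∃ p : G.Walk x y, ∀ z ∈ p.support, z ∉ S

/-- The vertex sets of the connected components of `G ∖ S`.  For a cycle (or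
any subgraph) `C`, the `C`-partition of the paper consists of `C` together
with these components; its size is the number of components. -/
def componentsAvoiding (G : Multigraph V) (S : Set V) : Set (Set V) :=
  {T | ∃ x, x ∉ S ∧ T = {y | G.ReachAvoid S x y}}

/-- Contract the (nonempty) vertex set `S` of `G` to a single new vertex
(`none`), deleting the edges inside `S`. -/
noncomputable def contractSet (G : Multigraph V) (S : Set V) :
    Multigraph (Option {x : V // x ∉ S}) where
  Edge := {e : G.Edge // ¬ ∀ x ∈ G.ends e, x ∈ S}
  ends e := (G.ends e.1).map fun x => if h : x ∈ S then none else some ⟨x, h⟩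
  loopless := by
    rintro ⟨e, he⟩ hd
    obtain ⟨x, y, hxy⟩ := exists_pair_eq (G.ends e)
    have hxyne : x ≠ y := by
      have h0 := G.loopless e
      rw [hxy, Sym2.mk_isDiag_iff] at h0
      exact h0
    have hor : x ∉ S ∨ y ∉ S := by
      by_contra hcon
      push_neg at hcon
      refine he fun z hz => ?_
      rw [hxy, Sym2.mem_iff] at hz
      rcases hz with rfl | rfl
      exacts [hcon.1, hcon.2]
    simp only [hxy, Sym2.map_pair_eq, Sym2.mk_isDiag_iff] at hd
    rcases hor with hx | hy
    · rw [dif_neg hx] at hd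
      by_cases hy : y ∈ S
      · rw [dif_pos hy] at hd; exact absurd hd (by simp)
      · rw [dif_neg hy] at hd
        exact hxyne (congrArg Subtype.val (Option.some_injective _ hd))
    · rw [dif_neg hy] at hd
      by_cases hx : x ∈ S
      · rw [dif_pos hx] at hd; exact absurd hd (by simp)
      · rw [dif_neg hx] at hd
        exact hxyne (congrArg Subtype.val (Option.some_injective _ hd))
  edge_finite := by
    have := G.edge_finite
    exact inferInstance

/-- The subgraph of `G` induced by the vertex set `S`. -/
noncomputable def induce (G : Multigraph V) (S : Set V) : Multigraph ↥S where
  Edge := {e : G.Edge // ∀ x ∈ G.ends e, x ∈ S}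
  ends e := sym2RestrictP (· ∈ S) (G.ends e.1) e.2
  loopless := fun e => sym2RestrictP_not_isDiag _ _ _ (G.loopless e.1)
  edge_finite := by
    have := G.edge_finite
    exact inferInstance

/-- Isomorphism of multigraphs. -/
structure Iso {V W : Type} (G : Multigraph V) (H : Multigraph W) where
  vmap : V ≃ W
  emap : G.Edge ≃ H.Edge
  ends_vmap : ∀ e : G.Edge, H.ends (emap e) = (G.ends e).map vmap

/-- `G` is quasi `k`-regular: at most one vertex has degree different from `k`. -/
def QuasiRegular (G : Multigraph V) (k : ℕ) : Prop :=
  {v : V | G.degree v ≠ k}.Subsingleton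

end Multigraph
namespace Multigraph

open scoped Classical

variable {V : Type}

/-- Block gluing: identify the vertex `u₁` of `G₁` with the vertex `u₂` of `G₂`
(the identified vertex is represented by `Sum.inl u₁`), keeping all edges. -/
noncomputable def blockGlue {V₁ V₂ : Type} (G₁ : Multigraph V₁) (G₂ : Multigraph V₂)
    (u₁ : V₁) (u₂ : V₂) : Multigraph (V₁ ⊕ {y : V₂ // y ≠ u₂}) where
  Edge := G₁.Edge ⊕ G₂.Edge
  ends e :=
    match e with
    | .inl e => (G₁.ends e).map Sum.inl
    | .inr e => (G₂.ends e).map fun y => if h : y = u₂ then Sum.inl u₁ else Sum.inr ⟨y, h⟩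
  loopless := by
    rintro (e | e) hd
    · exact map_not_isDiag _ _ (fun x _ y _ h => Sum.inl_injective h) (G₁.loopless e) hd
    · refine map_not_isDiag _ _ (fun x _ y _ h => ?_) (G₂.loopless e) hd
      by_cases hx : x = u₂ <;> by_cases hy : y = u₂
      · rw [hx, hy]
      · simp [hx, hy] at h
      · simp [hx, hy] at h
      · simp [hx, hy] at h
        exact h
  edge_finite := by
    have := G₁.edge_finite; have := G₂.edge_finite
    exact inferInstance

/-- `k`-bridge addition: add a new vertex (`none`) joined to the existing
vertex `v` by `k` parallel edges. -/
def bridgeAdd (G : Multigraph V) (v : V) (k : ℕ) : Multigraph (Option V) where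
  Edge := G.Edge ⊕ Fin k
  ends e :=
    match e with
    | .inl e => (G.ends e).map some
    | .inr _ => s(none, some v)
  loopless := by
    rintro (e | i) hd
    · exact map_not_isDiag _ _ (fun x _ y _ h => Option.some_injective _ h) (G.loopless e) hd
    · rw [Sym2.mk_isDiag_iff] at hd
      exact absurd hd (by simp)
  edge_finite := by
    have := G.edge_finite
    exact inferInstance

end Multigraph
namespace Multigraph

open scoped Classical

variable {V : Type}

lemma other_ne {G : Multigraph V} {u : V} {e : G.Edge} (h : u ∈ G.ends e) :
    Sym2.Mem.other h ≠ u := by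
  intro heq
  have hs := Sym2.other_spec h
  rw [heq] at hs
  have hl := G.loopless e
  rw [← hs, Sym2.mk_isDiag_iff] at hl
  exact hl rfl

/-- Vertex gluing: given vertices `u₁` of `G₁` and `u₂` of `G₂`, both of degree
`k` (witnessed by enumerations `ι₁`, `ι₂` of their incident edges), delete
`u₁` and `u₂` and join, for each `i`, the other endpoint of the `i`-th edge at
`u₁` to the other endpoint of the `i`-th edge at `u₂`. -/
noncomputable def vertexGlue {V₁ V₂ : Type} (G₁ : Multigraph V₁) (G₂ : Multigraph V₂)
    (u₁ : V₁) (u₂ : V₂) {k : ℕ}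
    (ι₁ : Fin k ≃ {e : G₁.Edge // u₁ ∈ G₁.ends e})
    (ι₂ : Fin k ≃ {e : G₂.Edge // u₂ ∈ G₂.ends e}) :
    Multigraph ({x : V₁ // x ≠ u₁} ⊕ {y : V₂ // y ≠ u₂}) where
  Edge := {e : G₁.Edge // u₁ ∉ G₁.ends e} ⊕ {e : G₂.Edge // u₂ ∉ G₂.ends e} ⊕ Fin k
  ends e :=
    match e with
    | .inl e =>
        (sym2RestrictP (· ≠ u₁) (G₁.ends e.1) fun x hx hxe => e.2 (hxe ▸ hx)).map Sum.inl
    | .inr (.inl e) =>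
        (sym2RestrictP (· ≠ u₂) (G₂.ends e.1) fun y hy hye => e.2 (hye ▸ hy)).map Sum.inr
    | .inr (.inr i) =>
        s(Sum.inl ⟨Sym2.Mem.other (ι₁ i).2, other_ne (ι₁ i).2⟩,
          Sum.inr ⟨Sym2.Mem.other (ι₂ i).2, other_ne (ι₂ i).2⟩)
  loopless := by
    rintro (e | e | i) hd
    · exact map_not_isDiag _ _ (fun x _ y _ h => Sum.inl_injective h)
        (sym2RestrictP_not_isDiag _ _ _ (G₁.loopless e.1)) hd
    · exact map_not_isDiag _ _ (fun x _ y _ h => Sum.inr_injective h)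
        (sym2RestrictP_not_isDiag _ _ _ (G₂.loopless e.1)) hd
    · rw [Sym2.mk_isDiag_iff] at hd
      exact absurd hd (by simp)
  edge_finite := by
    have := G₁.edge_finite; have := G₂.edge_finite
    exact inferInstance

/-- Cycle expansion: replace the vertex `u`, of degree `d` with incident edges
enumerated by `ι`, by a cycle on `d'` new vertices `u_0, …, u_{d'-1}`
(`2 ≤ d' ≤ d`); the `i`-th former edge at `u` is attached to `u_i` for
`i < d' - 1` and to `u_{d'-1}` for `i ≥ d' - 1`, so each of `u_0, …, u_{d'-2}`
receives exactly one of them and `u_{d'-1}` receives the rest. -/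
noncomputable def cycleExpand (G : Multigraph V) (u : V) {d d' : ℕ}
    (h2 : 2 ≤ d') (hdd : d' ≤ d)
    (ι : Fin d ≃ {e : G.Edge // u ∈ G.ends e}) :
    Multigraph ({x : V // x ≠ u} ⊕ Fin d') where
  Edge := {e : G.Edge // u ∉ G.ends e} ⊕ (Fin d ⊕ Fin d')
  ends e :=
    match e with
    | .inl e =>
        (sym2RestrictP (· ≠ u) (G.ends e.1) fun x hx hxe => e.2 (hxe ▸ hx)).map Sum.inl
    | .inr (.inl i) =>
        s(Sum.inr ⟨min i.1 (d' - 1), by omega⟩,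
          Sum.inl ⟨Sym2.Mem.other (ι i).2, other_ne (ι i).2⟩)
    | .inr (.inr j) =>
        s(Sum.inr j, Sum.inr ⟨(j.1 + 1) % d', Nat.mod_lt _ (by omega)⟩)
  loopless := by
    rintro (e | i | j) hd
    · exact map_not_isDiag _ _ (fun x _ y _ h => Sum.inl_injective h)
        (sym2RestrictP_not_isDiag _ _ _ (G.loopless e.1)) hd
    · rw [Sym2.mk_isDiag_iff] at hd
      exact absurd hd (by simp)
    · rw [Sym2.mk_isDiag_iff] at hd
      have hj : j.1 < d' := j.2
      have := congrArg Fin.val (Sum.inr_injective hd)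
      simp only at this
      rcases Nat.lt_or_ge (j.1 + 1) d' with h | h
      · rw [Nat.mod_eq_of_lt h] at this; omega
      · have hj1 : j.1 + 1 = d' := by omega
        rw [hj1, Nat.mod_self] at this; omega
  edge_finite := by
    have := G.edge_finite
    exact inferInstance

end Multigraph
namespace Multigraph

open scoped Classical

variable {V : Type}

/-- The edges of `G` crossing the vertex bipartition `⟨A, Aᶜ⟩`. -/
def cutEdges (G : Multigraph V) (A : Set V) : Set G.Edge :=
  {e | (∃ x ∈ G.ends e, x ∈ A) ∧ ∃ y ∈ G.ends e, y ∉ A}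

/-- The bipartition `⟨A, Aᶜ⟩` is a minimum edge cut of `G`: both sides are
nonempty and no other bipartition has fewer crossing edges. -/
def IsMinCut (G : Multigraph V) (A : Set V) : Prop :=
  A.Nonempty ∧ Aᶜ.Nonempty ∧
    ∀ B : Set V, B.Nonempty → Bᶜ.Nonempty →
      (G.cutEdges A).ncard ≤ (G.cutEdges B).ncard

/-- One side of a vertex splitting: keep the side `A` of the cut `⟨A, Aᶜ⟩`,
delete the other side, and reattach each cut edge to a single new vertex
(`none`). -/
noncomputable def splitSide (G : Multigraph V) (A : Set V) :
    Multigraph (Option {x : V // x ∈ A}) where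
  Edge := {e : G.Edge // ∀ x ∈ G.ends e, x ∈ A} ⊕ {e : G.Edge // e ∈ G.cutEdges A}
  ends e :=
    match e with
    | .inl e => (sym2RestrictP (· ∈ A) (G.ends e.1) e.2).map some
    | .inr e =>
        s(none, some ⟨Classical.choose e.2.1, (Classical.choose_spec e.2.1).2⟩)
  loopless := by
    rintro (e | e) hd
    · exact map_not_isDiag _ _ (fun x _ y _ h => Option.some_injective _ h)
        (sym2RestrictP_not_isDiag _ _ _ (G.loopless e.1)) hd
    · rw [Sym2.mk_isDiag_iff] at hd
      exact absurd hd (by simp)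
  edge_finite := by
    have := G.edge_finite
    exact inferInstance

/-- The dumbbell graph: two vertices joined by three parallel edges. -/
def dumbbell : Multigraph (Fin 2) where
  Edge := Fin 3
  ends _ := s(0, 1)
  loopless := fun _ h => absurd (Sym2.mk_isDiag_iff.mp h) (by decide)
  edge_finite := inferInstance

/-- `B` is (the vertex set of) a block of `G`: a maximal set of vertices
inducing a connected, 2-vertex-connected subgraph. -/
def IsBlock (G : Multigraph V) (B : Set V) : Prop :=
  (G.induce B).Biconnected ∧
    ∀ B' : Set V, B ⊆ B' → (G.induce B').Biconnected → B' = B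

/-- The set of double edges of `G`, as unordered pairs of distinct parallel
edges. -/
def doubleEdges (G : Multigraph V) : Set (Sym2 G.Edge) :=
  {z | ∃ e f : G.Edge, z = s(e, f) ∧ e ≠ f ∧ G.ends e = G.ends f}

/-- A collapsible cycle: a chordless, non-articulation cycle, all but at most
one of whose vertices have degree 3, whose contraction to a single vertex
yields an exactly 3-edge-connected multigraph. -/
def IsCollapsible {G : Multigraph V} {v : V} (p : G.Walk v v) : Prop :=
  IsCycle p ∧ IsChordless p ∧
    (G.componentsAvoiding {x | x ∈ p.support}).Subsingleton ∧
    {x : V | x ∈ p.support ∧ G.degree x ≠ 3}.Subsingleton ∧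
    (G.contractSet {x | x ∈ p.support}).ExactlyEdgeConnected 3

end Multigraph
namespace Multigraph

open scoped Classical

variable {V : Type}

/-- Smooth out the degree-two vertex `x` (whose two incident edges are
`e₁ = (x, a)` and `e₂ = (x, b)`): delete `x`, `e₁` and `e₂` and add a single
new edge joining `a` and `b`. -/
noncomputable def smoothAt {S : Set V} (H : Multigraph ↥S) (x a b : ↥S)
    (e₁ e₂ : H.Edge) (hne : e₁ ≠ e₂)
    (h₁ : H.ends e₁ = s(x, a)) (h₂ : H.ends e₂ = s(x, b))
    (hax : a ≠ x) (hbx : b ≠ x) (hab : a ≠ b)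
    (hdeg : ∀ e : H.Edge, x ∈ H.ends e → e = e₁ ∨ e = e₂) :
    Multigraph ↥(S \ {(x : V)}) where
  Edge := {e : H.Edge // e ≠ e₁ ∧ e ≠ e₂} ⊕ Unit
  ends e :=
    match e with
    | .inl e =>
        (sym2RestrictP (fun y : ↥S => y ≠ x) (H.ends e.1)
            (fun y hy hyx => by
              subst hyx
              rcases hdeg e.1 hy with h | h
              exacts [e.2.1 h, e.2.2 h])).map
          fun y => ⟨y.1.1, y.1.2, fun hh => y.2 (Subtype.ext hh)⟩
    | .inr _ =>
        s(⟨a.1, a.2, fun hh => hax (Subtype.ext hh)⟩,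
          ⟨b.1, b.2, fun hh => hbx (Subtype.ext hh)⟩)
  loopless := by
    rintro (e | e) hd
    · refine map_not_isDiag _ _ (fun y _ z _ h => ?_)
        (sym2RestrictP_not_isDiag _ _ _ (H.loopless e.1)) hd
      have hv := Subtype.ext_iff.mp h
      exact Subtype.ext (Subtype.ext hv)
    · rw [Sym2.mk_isDiag_iff] at hd
      have hv := Subtype.ext_iff.mp hd
      exact hab (Subtype.ext hv)
  edge_finite := by
    have := H.edge_finite
    exact inferInstance

/-- `SmoothSeq H K` : the multigraph `K` is obtained from `H` by a finite
sequence of smoothings of degree-two vertices. -/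
inductive SmoothSeq {V : Type} : ∀ {S T : Set V}, Multigraph ↥S → Multigraph ↥T → Prop
  | refl {S : Set V} (H : Multigraph ↥S) : SmoothSeq H H
  | step {S T : Set V} {H : Multigraph ↥S} {K : Multigraph ↥T}
      (x a b : ↥S) (e₁ e₂ : H.Edge) (hne : e₁ ≠ e₂)
      (h₁ : H.ends e₁ = s(x, a)) (h₂ : H.ends e₂ = s(x, b))
      (hax : a ≠ x) (hbx : b ≠ x) (hab : a ≠ b)
      (hdeg : ∀ e : H.Edge, x ∈ H.ends e → e = e₁ ∨ e = e₂) :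
      SmoothSeq (smoothAt H x a b e₁ e₂ hne h₁ h₂ hax hbx hab hdeg) K → SmoothSeq H K

/-- `G` is a 3-thick tree: it is obtained from a tree by replacing every tree
edge by three parallel edges. -/
def IsThreeThickTree (G : Multigraph V) : Prop :=
  ∃ T : SimpleGraph V, T.IsTree ∧
    ∃ f : G.Edge ≃ T.edgeSet × Fin 3, ∀ e : G.Edge, G.ends e = ((f e).1 : Sym2 V)

/-- The graphs obtainable from dumbbell graphs by cycle expansions and block
gluings (up to isomorphism). -/
inductive Synth3 : ∀ {V : Type}, Multigraph V → Prop
  | dumbbell : Synth3 dumbbell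
  | glue {V₁ V₂ : Type} {G₁ : Multigraph V₁} {G₂ : Multigraph V₂} (u₁ : V₁) (u₂ : V₂) :
      Synth3 G₁ → Synth3 G₂ → Synth3 (blockGlue G₁ G₂ u₁ u₂)
  | expand {V : Type} {G : Multigraph V} (u : V) {d d' : ℕ} (h2 : 2 ≤ d') (hdd : d' ≤ d)
      (ι : Fin d ≃ {e : G.Edge // u ∈ G.ends e}) :
      Synth3 G → Synth3 (G.cycleExpand u h2 hdd ι)
  | iso {V W : Type} {G : Multigraph V} {H : Multigraph W} :
      Synth3 G → Iso G H → Synth3 H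

/-- The graphs obtainable from 3-thick trees by block-respecting cycle
expansions (cycle expansions whose new cycle lies inside a single block of the
resulting graph), up to isomorphism. -/
inductive BRSynth : ∀ {V : Type}, Multigraph V → Prop
  | base {V : Type} {G : Multigraph V} : IsThreeThickTree G → BRSynth G
  | expand {V : Type} {G : Multigraph V} (u : V) {d d' : ℕ} (h2 : 2 ≤ d') (hdd : d' ≤ d)
      (ι : Fin d ≃ {e : G.Edge // u ∈ G.ends e})
      (hblock : ∃ B : Set ({x : V // x ≠ u} ⊕ Fin d'),
        (G.cycleExpand u h2 hdd ι).IsBlock B ∧ ∀ j : Fin d', Sum.inr j ∈ B) :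
      BRSynth G → BRSynth (G.cycleExpand u h2 hdd ι)
  | iso {V W : Type} {G : Multigraph V} {H : Multigraph W} :
      BRSynth G → Iso G H → BRSynth H

end Multigraph
namespace Multigraph

/-!
Among the walks from `w` to `v` that avoid the edge `e` and the vertex `u`, take a shortest one;
it is a path `r`, and `e` followed by `r` is a cycle. Such walks exist: of three edge-disjoint
`w`–`v` trails at most one uses `e`, and `u`, an inner vertex of degree 3, cannot lie on two of
the others. A chord of the cycle would shortcut `r` unless it is parallel to an edge of `r`; but
every double edge has `u` as an endpoint, and `r` avoids `u`.
-/

variable {V : Type} {G : Multigraph V}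

lemma ne_of_ends_eq {e : G.Edge} {x y : V} (he : G.ends e = s(x, y)) : x ≠ y := by
  have h := G.loopless e
  rwa [he, Sym2.mk_isDiag_iff] at h

namespace Walk

def append : ∀ {a b c : V}, G.Walk a b → G.Walk b c → G.Walk a c
  | _, _, _, nil _, q => q
  | _, _, _, cons e he p, q => cons e he (p.append q)

lemma append_assoc {a b c d : V} (p : G.Walk a b) (q : G.Walk b c) (r : G.Walk c d) :
    (p.append q).append r = p.append (q.append r) := by
  induction p with
  | nil => rfl
  | cons e he p ih => simp only [append, ih]

@[simp]
lemma edges_append {a b c : V} (p : G.Walk a b) (q : G.Walk b c) :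
    (p.append q).edges = p.edges ++ q.edges := by
  induction p with
  | nil => rfl
  | cons e he p ih => simp only [append, edges, ih, List.cons_append]

lemma start_mem_support {a b : V} (p : G.Walk a b) : a ∈ p.support := by
  cases p <;> exact List.mem_cons_self

lemma end_mem_support {a b : V} (p : G.Walk a b) : b ∈ p.support := by
  induction p with
  | nil => exact List.mem_cons_self
  | cons _ _ _ ih => exact List.mem_cons_of_mem _ ih

lemma mem_support_append_iff {a b c x : V} (p : G.Walk a b) (q : G.Walk b c) :
    x ∈ (p.append q).support ↔ x ∈ p.support ∨ x ∈ q.support := by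
  induction p with
  | nil =>
    simp only [append, support, List.mem_singleton]
    exact (or_iff_right_of_imp fun h => h ▸ q.start_mem_support).symm
  | cons e he p ih => simp only [append, support, List.mem_cons, ih, or_assoc]

lemma support_suffix_append {a b c : V} (p : G.Walk a b) (q : G.Walk b c) :
    q.support <:+ (p.append q).support := by
  induction p with
  | nil => exact List.suffix_refl _
  | cons _ _ _ ih => exact (ih q).trans (List.suffix_cons _ _)

lemma mem_support_of_mem_edges {a b x : V} (p : G.Walk a b) {f : G.Edge} (hf : f ∈ p.edges)
    (hx : x ∈ G.ends f) : x ∈ p.support := by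
  induction p with
  | nil => simp [edges] at hf
  | cons e he p ih =>
    rcases List.mem_cons.mp hf with rfl | hf
    · rw [he, Sym2.mem_iff] at hx
      rcases hx with rfl | rfl
      exacts [List.mem_cons_self, List.mem_cons_of_mem _ p.start_mem_support]
    · exact List.mem_cons_of_mem _ (ih hf)

lemma edges_nodup_of_support_nodup {a b : V} (p : G.Walk a b) (hp : p.support.Nodup) :
    p.edges.Nodup := by
  induction p with
  | nil => exact List.nodup_nil
  | cons e he p ih =>
    rw [support, List.nodup_cons] at hp
    refine List.nodup_cons.mpr ⟨fun he' => hp.1 ?_, ih hp.2⟩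
    exact p.mem_support_of_mem_edges he' (by simp [he])

lemma exists_eq_append_of_mem_support {a b x : V} (p : G.Walk a b) (hx : x ∈ p.support) :
    ∃ (p₁ : G.Walk a x) (p₂ : G.Walk x b), p = p₁.append p₂ := by
  induction p with
  | nil =>
    obtain rfl := List.mem_singleton.mp hx
    exact ⟨nil _, nil _, rfl⟩
  | cons e he p ih =>
    rcases List.mem_cons.mp hx with rfl | hx
    · exact ⟨nil _, cons e he p, rfl⟩
    · obtain ⟨p₁, p₂, rfl⟩ := ih hx
      exact ⟨cons e he p₁, p₂, rfl⟩

lemma exists_eq_append_append {a b x y : V} (p : G.Walk a b) (hx : x ∈ p.support)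
    (hy : y ∈ p.support) : ∃ x' y', s(x', y') = s(x, y) ∧
      ∃ (p₁ : G.Walk a x') (m : G.Walk x' y') (p₂ : G.Walk y' b), p = p₁.append (m.append p₂) := by
  obtain ⟨p₁, p₂, rfl⟩ := exists_eq_append_of_mem_support p hx
  rcases (mem_support_append_iff p₁ p₂).mp hy with hy | hy
  · obtain ⟨p₁₁, p₁₂, rfl⟩ := exists_eq_append_of_mem_support p₁ hy
    exact ⟨y, x, Sym2.eq_swap, p₁₁, p₁₂, p₂, append_assoc _ _ _⟩
  · obtain ⟨p₂₁, p₂₂, rfl⟩ := exists_eq_append_of_mem_support p₂ hy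
    exact ⟨x, y, rfl, p₁, p₂₁, p₂₂, rfl⟩

lemma two_le_length_or_eq_singleton {a b : V} (p : G.Walk a b) (hab : a ≠ b) :
    2 ≤ p.edges.length ∨ ∃ f, p.edges = [f] ∧ G.ends f = s(a, b) := by
  rcases p with _ | ⟨f, hf, _ | ⟨f', hf', p⟩⟩
  · exact absurd rfl hab
  · exact Or.inr ⟨f, rfl, hf⟩
  · exact Or.inl (by simp [edges])

lemma exists_path_sublist {a b : V} (p : G.Walk a b) :
    ∃ r : G.Walk a b, r.support.Nodup ∧ r.support.Sublist p.support ∧ r.edges.Sublist p.edges := by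
  induction p with
  | nil v => exact ⟨nil v, List.nodup_singleton v, .refl _, .refl _⟩
  | @cons a m b e he p ih =>
    obtain ⟨r, hr, hrs, hre⟩ := ih
    by_cases ha : a ∈ r.support
    · obtain ⟨r₁, r₂, rfl⟩ := exists_eq_append_of_mem_support r ha
      have hsupp := (support_suffix_append r₁ r₂).sublist
      have hedges : r₂.edges.Sublist (r₁.append r₂).edges := by
        simpa only [edges_append] using List.sublist_append_right r₁.edges r₂.edges
      exact ⟨r₂, hr.sublist hsupp, (hsupp.trans hrs).cons _, (hedges.trans hre).cons _⟩
    · exact ⟨cons e he r, List.nodup_cons.mpr ⟨ha, hr⟩, hrs.cons_cons _, hre.cons_cons _⟩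

lemma one_lt_ncard_incident_edges {a b u : V} (p : G.Walk a b) (hp : p.edges.Nodup)
    (hu : u ∈ p.support) (hua : u ≠ a) (hub : u ≠ b) :
    1 < {f | f ∈ p.edges ∧ u ∈ G.ends f}.ncard := by
  rw [Set.one_lt_ncard_iff (Set.toFinite _)]
  induction p with
  | nil => exact absurd (List.mem_singleton.mp hu) hua
  | @cons a m b e he p ih =>
    rw [edges, List.nodup_cons] at hp
    by_cases hum : u = m
    · subst hum
      clear ih
      rcases p with _ | ⟨e₂, he₂, p⟩
      · exact absurd rfl hub
      · refine ⟨e, e₂, ⟨List.mem_cons_self, by simp [he]⟩,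
          ⟨List.mem_cons_of_mem _ List.mem_cons_self, by simp [he₂]⟩, ?_⟩
        rintro rfl
        exact hp.1 List.mem_cons_self
    · obtain ⟨f₁, f₂, h₁, h₂, hne⟩ := ih hp.2 ((List.mem_cons.mp hu).resolve_left hua) hum hub
      exact ⟨f₁, f₂, ⟨List.mem_cons_of_mem _ h₁.1, h₁.2⟩, ⟨List.mem_cons_of_mem _ h₂.1, h₂.2⟩, hne⟩

lemma four_le_degree_of_mem_support {a b u : V} {p q : G.Walk a b} (hp : p.edges.Nodup)
    (hq : q.edges.Nodup) (hpq : ∀ f ∈ p.edges, f ∉ q.edges) (hup : u ∈ p.support)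
    (huq : u ∈ q.support) (hua : u ≠ a) (hub : u ≠ b) : 4 ≤ G.degree u := by
  have hdisj : Disjoint {f | f ∈ p.edges ∧ u ∈ G.ends f} {f | f ∈ q.edges ∧ u ∈ G.ends f} :=
    Set.disjoint_left.mpr fun f hfp hfq => hpq f hfp.1 hfq.1
  have hp₂ := p.one_lt_ncard_incident_edges hp hup hua hub
  have hq₂ := q.one_lt_ncard_incident_edges hq huq hua hub
  calc 4 ≤ {f | f ∈ p.edges ∧ u ∈ G.ends f}.ncard + {f | f ∈ q.edges ∧ u ∈ G.ends f}.ncard := by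
        omega
    _ = ({f | f ∈ p.edges ∧ u ∈ G.ends f} ∪ {f | f ∈ q.edges ∧ u ∈ G.ends f}).ncard :=
        (Set.ncard_union_eq hdisj).symm
    _ ≤ G.degree u := Set.ncard_le_ncard (fun f hf => hf.elim And.right And.right)

def Avoids {a b : V} (p : G.Walk a b) (F : Set G.Edge) (U : Set V) : Prop :=
  (∀ f ∈ p.edges, f ∉ F) ∧ ∀ x ∈ p.support, x ∉ U

lemma Avoids.of_subset {a b : V} {F : Set G.Edge} {U : Set V} {p q : G.Walk a b}
    (hp : p.Avoids F U) (he : q.edges ⊆ p.edges) (hs : q.support ⊆ p.support) :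
    q.Avoids F U :=
  ⟨fun f hf => hp.1 f (he hf), fun x hx => hp.2 x (hs hx)⟩

lemma exists_avoids_of_hasEDP {a b u : V} (h : G.HasEDP a b 3) (e : G.Edge)
    (hu : G.degree u ≤ 3) (hua : u ≠ a) (hub : u ≠ b) : ∃ p : G.Walk a b, p.Avoids {e} {u} := by
  obtain ⟨P, hnd, hdisj⟩ := h
  by_contra! hcon
  have hthrough : ∀ i, e ∈ (P i).edges ∨ u ∈ (P i).support := fun i => by
    by_contra! hPi
    exact hcon (P i) ⟨fun f hf hfe => hPi.1 (hfe ▸ hf), fun x hx hxu => hPi.2 (hxu ▸ hx)⟩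
  have hu_of_e : ∀ i j, i ≠ j → e ∈ (P i).edges → u ∈ (P j).support := fun i j hij hi =>
    (hthrough j).resolve_left (hdisj i j hij e hi)
  obtain ⟨i, j, hij, hi, hj⟩ : ∃ i j : Fin 3, i ≠ j ∧ u ∈ (P i).support ∧ u ∈ (P j).support := by
    rcases hthrough 0 with h0 | h0
    · exact ⟨1, 2, by decide, hu_of_e 0 1 (by decide) h0, hu_of_e 0 2 (by decide) h0⟩
    rcases hthrough 1 with h1 | h1
    · exact ⟨0, 2, by decide, h0, hu_of_e 1 2 (by decide) h1⟩
    · exact ⟨0, 1, by decide, h0, h1⟩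
  have := four_le_degree_of_mem_support (hnd i) (hnd j) (hdisj i j hij) hi hj hua hub
  omega

lemma exists_shortest_path_avoids {a b : V} {F : Set G.Edge} {U : Set V} (p : G.Walk a b)
    (hp : p.Avoids F U) : ∃ r : G.Walk a b, r.Avoids F U ∧ r.support.Nodup ∧
      ∀ r' : G.Walk a b, r'.Avoids F U → r.edges.length ≤ r'.edges.length := by
  classical
  have hex : ∃ n, ∃ r : G.Walk a b, r.Avoids F U ∧ r.edges.length = n := ⟨_, p, hp, rfl⟩
  obtain ⟨r, hr, hlen⟩ := Nat.find_spec hex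
  obtain ⟨r₀, hnd, hs, he⟩ := exists_path_sublist r
  refine ⟨r₀, hr.of_subset he.subset hs.subset, hnd, fun r' hr' => ?_⟩
  calc r₀.edges.length ≤ r.edges.length := he.length_le
    _ = Nat.find hex := hlen
    _ ≤ r'.edges.length := Nat.find_min' hex ⟨r', hr', rfl⟩

lemma exists_parallel_of_chord {a b x y : V} {F : Set G.Edge} {U : Set V} {p : G.Walk a b}
    (hp : p.Avoids F U) (hmin : ∀ r : G.Walk a b, r.Avoids F U → p.edges.length ≤ r.edges.length)
    {g : G.Edge} (hgF : g ∉ F) (hg : G.ends g = s(x, y)) (hx : x ∈ p.support)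
    (hy : y ∈ p.support) : ∃ f ∈ p.edges, G.ends f = G.ends g := by
  obtain ⟨x', y', hxy, p₁, m, p₂, rfl⟩ := exists_eq_append_append p hx hy
  rw [← hxy] at hg
  rcases two_le_length_or_eq_singleton m (ne_of_ends_eq hg) with hm | ⟨f, hf, hfg⟩
  · have hr : (p₁.append (cons g hg p₂)).Avoids F U := by
      refine ⟨fun f hf => ?_, fun z hz => hp.2 z ?_⟩
      · simp only [edges_append, edges, List.mem_append, List.mem_cons] at hf
        rcases hf with hf | rfl | hf
        · exact hp.1 f (by simp [hf])
        · exact hgF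
        · exact hp.1 f (by simp [hf])
      · simp only [mem_support_append_iff, support, List.mem_cons] at hz ⊢
        rcases hz with hz | rfl | hz
        · exact Or.inl hz
        · exact Or.inl p₁.end_mem_support
        · exact Or.inr (Or.inr hz)
    have := hmin _ hr
    simp only [edges_append, edges, List.length_append, List.length_cons] at this
    omega
  · exact ⟨f, by simp [hf], by rw [hfg, hg]⟩

end Walk

lemma isCycle_cons {v w : V} {e : G.Edge} (he : G.ends e = s(v, w)) {r : G.Walk w v}
    (hr : r.support.Nodup) (her : e ∉ r.edges) : IsCycle (Walk.cons e he r) := by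
  refine ⟨List.nodup_cons.mpr ⟨her, r.edges_nodup_of_support_nodup hr⟩, hr, ?_⟩
  rcases r.two_le_length_or_eq_singleton (ne_of_ends_eq he).symm with h | ⟨f, h, -⟩ <;>
    simp only [Walk.edges, List.length_cons, h] <;> omega

theorem exists_chordless_cycle_quasiRegular_general {V : Type} (G : Multigraph V)
    (h3 : G.EdgeConnected 3) (h : V) (hq : ∀ x : V, x ≠ h → G.degree x = 3)
    {v w : V} (e : G.Edge) (he : G.ends e = s(v, w)) (hvw : v = h ∨ w = h)
    (u : V) (huv : u ≠ v) (huw : u ≠ w)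
    (hu : ∀ z ∈ G.doubleEdges, ∀ f ∈ z, u ∈ G.ends f) :
    ∃ (x : V) (p : G.Walk x x), IsCycle p ∧ IsChordless p ∧
      e ∈ p.edges ∧ u ∉ p.support := by
  have hu3 : G.degree u ≤ 3 := (hq u (by rcases hvw with rfl | rfl <;> assumption)).le
  obtain ⟨q, hq_avoids⟩ := Walk.exists_avoids_of_hasEDP (h3.2 w v (ne_of_ends_eq he).symm) e hu3 huw huv
  obtain ⟨r, hr, hr_nodup, hr_min⟩ := Walk.exists_shortest_path_avoids q hq_avoids
  have hru : u ∉ r.support := fun hur => hr.2 u hur rfl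
  refine ⟨v, .cons e he r, isCycle_cons he hr_nodup (hr.1 e · rfl), ?_, List.mem_cons_self, ?_⟩
  · intro g hg x y hgxy hx hy
    have hmem : ∀ {z}, z ∈ v :: r.support → z ∈ r.support := fun hz =>
      (List.mem_cons.mp hz).elim (· ▸ r.end_mem_support) id
    have hge : g ∉ ({e} : Set G.Edge) := fun hge => hg (hge ▸ List.mem_cons_self)
    obtain ⟨f, hf, hfg⟩ := r.exists_parallel_of_chord hr hr_min hge hgxy (hmem hx) (hmem hy)
    have hfg_ne : f ≠ g := fun hfg => hg (List.mem_cons_of_mem _ (hfg ▸ hf))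
    have huf : u ∈ G.ends f := hu _ ⟨f, g, rfl, hfg_ne, hfg⟩ f (Sym2.mem_mk_left f g)
    exact hru (r.mem_support_of_mem_edges hf huf)
  · exact List.not_mem_cons_of_ne_of_not_mem huv hru

/-- **Chordless cycles through an edge avoiding a vertex (quasi 3-regular
case).**  Let `G` be a quasi 3-regular, 3-edge-connected multigraph with
high-degree vertex `h`, let `e = (v, w)` be an edge with `v = h` or `w = h`,
and let `u` be a vertex distinct from `v` and `w`.  Suppose `G` has at most
one double edge and, if it has one, `u` is an endpoint of it.  Then `G`
contains a chordless cycle through the edge `e` avoiding the vertex `u`. -/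
theorem exists_chordless_cycle_quasiRegular {V : Type} (G : Multigraph V)
    (h3 : G.EdgeConnected 3) (h : V) (hq : ∀ x : V, x ≠ h → G.degree x = 3)
    {v w : V} (e : G.Edge) (he : G.ends e = s(v, w)) (hvw : v = h ∨ w = h)
    (u : V) (huv : u ≠ v) (huw : u ≠ w)
    (hdbl : G.doubleEdges.Subsingleton)
    (hu : ∀ z ∈ G.doubleEdges, ∀ f ∈ z, u ∈ G.ends f) :
    ∃ (x : V) (p : G.Walk x x), IsCycle p ∧ IsChordless p ∧
      e ∈ p.edges ∧ u ∉ p.support :=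
  exists_chordless_cycle_quasiRegular_general G h3 h hq e he hvw u huv huw hu

end Multigraph
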